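/- Generalized q-binomial theorem: sum_{n≥0} R_n(x,y;u|q) z^n/(q;q)_n = e_q(yz,u) / (xz;q)_∞, valid as formal power series in z (or for 0<|q|<1, |u|≤1, |xz|<1). -/

import Mathlib

/-- The q-shifted factorial `(a;q)_n = ∏_{j=0}^{n-1} (1 - a q^j)`. -/
noncomputable def qPoch (a q : ℂ) (n : ℕ) : ℂ := ∏ j ∈ Finset.range n, (1 - a * q ^ j)

/-- The Gaussian binomial coefficient `[n choose k]_q = (q;q)_n / ((q;q)_k (q;q)_{n-k})`. -/
noncomputable def qBinom (q : ℂ) (n k : ℕ) : ℂ := qPoch q q n / (qPoch q q k * qPoch q q (n - k))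

/-- The u-deformed homogeneous polynomial
`R_n(x,y;u|q) = ∑_{k=0}^n [n choose k]_q u^{C(k,2)} x^{n-k} y^k`. -/
noncomputable def Rpoly (q : ℂ) (n : ℕ) (x y u : ℂ) : ℂ :=
  ∑ k ∈ Finset.range (n + 1), qBinom q n k * u ^ (k.choose 2) * x ^ (n - k) * y ^ k

/-- The deformed q-exponential `e_q(w,u) = ∑_{k≥0} u^{C(k,2)} w^k / (q;q)_k`. -/
noncomputable def deq (q u w : ℂ) : ℂ := ∑' k : ℕ, u ^ (k.choose 2) * w ^ k / qPoch q q k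

/-- The infinite q-shifted factorial `(a;q)_∞ = ∏_{j≥0} (1 - a q^j)`. -/
noncomputable def qPochInf (a q : ℂ) : ℂ := ∏' j : ℕ, (1 - a * q ^ j)

/-!
The coefficient `R_n z^n / (q;q)_n` is exactly the `n`-th Cauchy-product coefficient of
`e_q(yz,u) · e_q(xz,1)`, so the theorem reduces to Euler's identity `e_q(w,1) (w;q)_∞ = 1`.
That identity comes from the functional equation `e_q(w,1) (1 - w) = e_q(qw,1)`: iterating it
gives `e_q(w,1) (w;q)_n = e_q(q^n w,1)`, and the right side tends to `e_q(0,1) = 1`.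
-/

open Finset Filter Topology

lemma qPoch_zero (a q : ℂ) : qPoch a q 0 = 1 :=
  prod_range_zero _

lemma qPoch_succ (a q : ℂ) (n : ℕ) : qPoch a q (n + 1) = qPoch a q n * (1 - a * q ^ n) :=
  prod_range_succ _ _

lemma one_sub_mul_pow_ne_zero {a q : ℂ} (ha : ‖a‖ < 1) (hq : ‖q‖ ≤ 1) (j : ℕ) :
    1 - a * q ^ j ≠ 0 := by
  have hlt : ‖a * q ^ j‖ < 1 := by
    rw [norm_mul, norm_pow]
    exact (mul_le_of_le_one_right (norm_nonneg a) (pow_le_one₀ (norm_nonneg q) hq)).trans_lt ha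
  exact sub_ne_zero.2 fun h => by simp [← h] at hlt

lemma qPoch_ne_zero {a q : ℂ} (ha : ‖a‖ < 1) (hq : ‖q‖ ≤ 1) (n : ℕ) : qPoch a q n ≠ 0 :=
  prod_ne_zero_iff.2 fun j _ => one_sub_mul_pow_ne_zero ha hq j

lemma deq_one (q w : ℂ) : deq q 1 w = ∑' k : ℕ, w ^ k / qPoch q q k := by
  simp [deq]

lemma deq_zero (q u : ℂ) : deq q u 0 = 1 := by
  rw [deq, tsum_eq_single 0 fun k hk => by simp [zero_pow hk]]
  simp [qPoch_zero]

section Summability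

variable {q : ℂ} (hq : ‖q‖ < 1)
include hq

/-- Ratio test: the ratio of consecutive terms is `w / (1 - q^{k+1}) → w`. -/
lemma summable_norm_pow_div_qPoch {w : ℂ} (hw : ‖w‖ < 1) :
    Summable fun k : ℕ => ‖w ^ k / qPoch q q k‖ := by
  have hfac : Tendsto (fun k : ℕ => ‖1 - q * q ^ k‖) atTop (𝓝 1) := by
    simpa using ((tendsto_pow_atTop_nhds_zero_of_norm_lt_one hq).const_mul q).const_sub 1 |>.norm
  have hratio : Tendsto (fun k : ℕ => ‖w‖ / ‖1 - q * q ^ k‖) atTop (𝓝 ‖w‖) := by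
    simpa [div_eq_mul_inv] using (hfac.inv₀ one_ne_zero).const_mul ‖w‖
  refine summable_of_ratio_norm_eventually_le (r := (1 + ‖w‖) / 2) (by linarith) ?_
  filter_upwards [hratio.eventually_le_const (by linarith : ‖w‖ < (1 + ‖w‖) / 2)] with k hk
  simp only [norm_norm, qPoch_succ, pow_succ, norm_div, norm_mul, norm_pow]
  calc ‖w‖ ^ k * ‖w‖ / (‖qPoch q q k‖ * ‖1 - q * q ^ k‖)
      = ‖w‖ / ‖1 - q * q ^ k‖ * (‖w‖ ^ k / ‖qPoch q q k‖) := by ring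
    _ ≤ (1 + ‖w‖) / 2 * (‖w‖ ^ k / ‖qPoch q q k‖) := by gcongr

lemma summable_norm_deq_term {u w : ℂ} (hu : ‖u‖ ≤ 1) (hw : ‖w‖ < 1) :
    Summable fun k : ℕ => ‖u ^ k.choose 2 * w ^ k / qPoch q q k‖ := by
  refine (summable_norm_pow_div_qPoch hq hw).of_nonneg_of_le (fun _ => norm_nonneg _) fun k => ?_
  simp only [norm_div, norm_mul, norm_pow]
  gcongr
  exact mul_le_of_le_one_left (by positivity) (pow_le_one₀ (norm_nonneg u) hu)

end Summability

section Euler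

variable {q : ℂ} (hq : ‖q‖ < 1)
include hq

lemma deq_one_mul_one_sub {w : ℂ} (hw : ‖w‖ < 1) : deq q 1 w * (1 - w) = deq q 1 (q * w) := by
  have hqw : ‖q * w‖ < 1 := by
    rw [norm_mul]; exact (mul_le_of_le_one_left (norm_nonneg w) hq.le).trans_lt hw
  have hs := (summable_norm_pow_div_qPoch hq hw).of_norm
  have hs' := (summable_norm_pow_div_qPoch hq hqw).of_norm
  have hshift : ∀ m : ℕ, w ^ (m + 1) / qPoch q q (m + 1) - (q * w) ^ (m + 1) / qPoch q q (m + 1)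
      = w * (w ^ m / qPoch q q m) := by
    intro m
    have := qPoch_ne_zero hq hq.le m
    have := one_sub_mul_pow_ne_zero hq hq.le m
    rw [qPoch_succ, mul_pow]
    field_simp
    ring
  have hdiff : (∑' m : ℕ, w ^ m / qPoch q q m) - ∑' m : ℕ, (q * w) ^ m / qPoch q q m
      = w * ∑' m : ℕ, w ^ m / qPoch q q m := by
    rw [← hs.tsum_sub hs', (hs.sub hs').tsum_eq_zero_add, tsum_congr hshift, tsum_mul_left]
    simp
  rw [deq_one, deq_one]
  linear_combination hdiff

lemma deq_one_mul_qPoch {w : ℂ} (hw : ‖w‖ < 1) (n : ℕ) :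
    deq q 1 w * qPoch w q n = deq q 1 (q ^ n * w) := by
  induction n with
  | zero => simp [qPoch_zero]
  | succ n ih =>
    have hqnw : ‖q ^ n * w‖ < 1 := by
      rw [norm_mul, norm_pow]
      exact (mul_le_of_le_one_left (norm_nonneg w) (pow_le_one₀ (norm_nonneg q) hq.le)).trans_lt hw
    rw [qPoch_succ, ← mul_assoc, ih, pow_succ', mul_assoc, ← deq_one_mul_one_sub hq hqnw]
    ring

/-- Tannery's theorem, with the terms of `e_q(w,1)` as dominating series. -/
lemma tendsto_deq_one_pow_mul {w : ℂ} (hw : ‖w‖ < 1) :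
    Tendsto (fun n : ℕ => deq q 1 (q ^ n * w)) atTop (𝓝 1) := by
  have hpow := tendsto_pow_atTop_nhds_zero_of_norm_lt_one hq
  simp only [deq_one]
  rw [← deq_zero q 1, deq_one]
  refine tendsto_tsum_of_dominated_convergence (summable_norm_pow_div_qPoch hq hw)
    (fun k => by simpa using ((hpow.mul_const w).pow k).div_const (qPoch q q k))
    (Eventually.of_forall fun n k => ?_)
  simp only [norm_div, norm_pow, norm_mul]
  gcongr
  exact mul_le_of_le_one_left (norm_nonneg w) (pow_le_one₀ (norm_nonneg q) hq.le)

lemma multipliable_one_sub_mul_pow (w : ℂ) : Multipliable fun j : ℕ => 1 - w * q ^ j := by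
  simp only [sub_eq_add_neg]
  exact Complex.multipliable_one_add_of_summable
    ((summable_geometric_of_norm_lt_one hq).mul_left w).neg

lemma deq_one_mul_qPochInf {w : ℂ} (hw : ‖w‖ < 1) : deq q 1 w * qPochInf w q = 1 :=
  tendsto_nhds_unique ((multipliable_one_sub_mul_pow hq w).hasProd.tendsto_prod_nat.const_mul _)
    ((tendsto_deq_one_pow_mul hq hw).congr fun n => (deq_one_mul_qPoch hq hw n).symm)

end Euler

lemma Rpoly_mul_pow_div_qPoch {q x y u z : ℂ} {n : ℕ} (hn : qPoch q q n ≠ 0) :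
    Rpoly q n x y u * z ^ n / qPoch q q n = ∑ kl ∈ antidiagonal n,
      u ^ kl.1.choose 2 * (y * z) ^ kl.1 / qPoch q q kl.1 * ((x * z) ^ kl.2 / qPoch q q kl.2) := by
  rw [Nat.sum_antidiagonal_eq_sum_range_succ_mk, Rpoly, sum_mul, sum_div]
  refine sum_congr rfl fun k hk => ?_
  obtain ⟨m, rfl⟩ := Nat.exists_eq_add_of_le (Nat.lt_succ_iff.1 (mem_range.1 hk))
  rw [qBinom, Nat.add_sub_cancel_left, pow_add z]
  field_simp
  ring

theorem generalized_q_binomial_theorem_general (q u x y z : ℂ) (hq : ‖q‖ < 1)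
    (hu : ‖u‖ ≤ 1) (hxz : ‖x * z‖ < 1) (hyz : ‖y * z‖ < 1) :
    (∑' n : ℕ, Rpoly q n x y u * z ^ n / qPoch q q n) = deq q u (y * z) / qPochInf (x * z) q := by
  have hEuler := deq_one_mul_qPochInf hq hxz
  calc (∑' n : ℕ, Rpoly q n x y u * z ^ n / qPoch q q n)
      = ∑' n : ℕ, ∑ kl ∈ antidiagonal n, u ^ kl.1.choose 2 * (y * z) ^ kl.1 / qPoch q q kl.1 *
          ((x * z) ^ kl.2 / qPoch q q kl.2) :=
        tsum_congr fun n => Rpoly_mul_pow_div_qPoch (qPoch_ne_zero hq hq.le n)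
    _ = deq q u (y * z) * deq q 1 (x * z) := by
        rw [← tsum_mul_tsum_eq_tsum_sum_antidiagonal_of_summable_norm
          (summable_norm_deq_term hq hu hyz) (summable_norm_pow_div_qPoch hq hxz), deq, deq_one]
    _ = deq q u (y * z) / qPochInf (x * z) q :=
        eq_div_of_mul_eq (right_ne_zero_of_mul_eq_one hEuler) (by rw [mul_assoc, hEuler, mul_one])

theorem generalized_q_binomial_theorem (q u x y z : ℂ) (hq0 : 0 < ‖q‖) (hq : ‖q‖ < 1)
    (hu : ‖u‖ ≤ 1) (hxz : ‖x * z‖ < 1) (hyz : ‖y * z‖ < 1) :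
    (∑' n : ℕ, Rpoly q n x y u * z ^ n / qPoch q q n) = deq q u (y * z) / qPochInf (x * z) q :=
  generalized_q_binomial_theorem_general q u x y z hq hu hxz hyz
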